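/- Let R be a commutative Noetherian ring with total quotient ring Q(R) and integral closure R̄ of R in Q(R). Then R̄ = ⋃_{I} (I : I), where the union runs over all trace ideals I of R containing a non-zerodivisor, and (I : I) = {α ∈ Q(R) : αI ⊆ I}. Consequently, if R has only finitely many regular trace ideals, then R̄ is a finitely generated R-module. -/

import Mathlib

/-!
For a regular ideal `I` of a Noetherian ring `R` and a non-zerodivisor `a ∈ I`, `a (I : I) ⊆ R`,
so `(I : I)` is a finitely generated `R`-module and a ring, hence integral over `R`.
Conversely, if `α` is integral then the conductor `J` of `R[α]` into `R` is a regular ideal with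
`α J ⊆ J`. Every `R`-linear `f : J → R` is multiplication by `f a / a` (as `a f j = j f a`), so
`α` also stabilises the trace ideal `tr J = Σ f(J)`, which is a regular trace ideal because taking
traces is idempotent. With finitely many regular trace ideals, `R̄` is the finite sum of the
finitely generated modules `(I : I)`.
-/

set_option synthInstance.maxHeartbeats 800000
/-- The trace ideal of an `R`-module `M`. -/
def traceIdeal (R : Type*) [CommRing R] (M : Type*) [AddCommGroup M] [Module R M] : Ideal R :=
  ⨆ f : M →ₗ[R] R, LinearMap.range f

open nonZeroDivisors

section TraceIdeal

variable {R : Type*} [CommRing R] {M : Type*} [AddCommGroup M] [Module R M]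

lemma apply_mem_traceIdeal (f : M →ₗ[R] R) (m : M) : f m ∈ traceIdeal R M :=
  Submodule.mem_iSup_of_mem f ⟨m, rfl⟩

lemma traceIdeal_le_iff {J : Ideal R} :
    traceIdeal R M ≤ J ↔ ∀ (f : M →ₗ[R] R) (m : M), f m ∈ J := by
  simp only [traceIdeal, iSup_le_iff, LinearMap.range_le_iff_comap, Submodule.eq_top_iff',
    Submodule.mem_comap]

lemma le_traceIdeal (I : Ideal R) : I ≤ traceIdeal R I := fun x hx =>
  apply_mem_traceIdeal I.subtype ⟨x, hx⟩

lemma traceIdeal_traceIdeal : traceIdeal R (traceIdeal R M) = traceIdeal R M := by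
  refine le_antisymm ?_ (le_traceIdeal _)
  rw [traceIdeal_le_iff]
  intro f
  -- `f (g m) = (f ∘ g) m`, so `f` maps the generators of `tr M` into `tr M`
  let T := traceIdeal R M
  have : T ≤ (Submodule.comap f T).map T.subtype := by
    rw [traceIdeal_le_iff]
    intro g m
    let g' : M →ₗ[R] T := g.codRestrict T (apply_mem_traceIdeal g)
    exact ⟨g' m, apply_mem_traceIdeal (f ∘ₗ g') m, rfl⟩
  intro x
  obtain ⟨y, hy, hxy⟩ := this x.2
  rwa [Subtype.ext hxy] at hy

lemma Ideal.mul_apply_comm {I : Ideal R} (f : I →ₗ[R] R) (x y : I) :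
    (x : R) * f y = y * f x := by
  have : (x : R) • y = (y : R) • x := Subtype.ext (mul_comm _ _)
  simpa only [map_smul, smul_eq_mul] using congrArg f this

end TraceIdeal

section Colon

variable {R : Type*} [CommRing R] {K : Type*} [CommRing K] [Algebra R K]

lemma Submodule.fg_of_isFractional [IsNoetherianRing R] {S : Submonoid R} [IsLocalization S K]
    {N : Submodule R K} (hN : IsFractional S N) : N.FG := by
  obtain ⟨s, hs, hsN⟩ := hN
  let mulS : K →ₗ[R] K := LinearMap.mulLeft R (algebraMap R K s)
  have hinj : Function.Injective mulS := (IsLocalization.map_units K ⟨s, hs⟩).isRegular.left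
  have hle : N.map mulS ≤ LinearMap.range (Algebra.linearMap R K) := by
    rintro _ ⟨x, hx, rfl⟩
    obtain ⟨r, hr⟩ := hsN x hx
    exact ⟨r, by rw [Algebra.linearMap_apply, hr, Algebra.smul_def]; rfl⟩
  refine Submodule.fg_of_fg_map_injective mulS hinj ?_
  rw [← Submodule.map_comap_eq_self hle]
  exact (IsNoetherian.noetherian _).map _

variable (K) in
/-- The ring `(I : I) = {α ∈ K | α I ⊆ I}`. -/
def Ideal.selfColon (I : Ideal R) : Subalgebra R K where
  carrier := {α | ∀ x ∈ I, ∃ y ∈ I, α * algebraMap R K x = algebraMap R K y}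
  mul_mem' {α β} hα hβ x hx := by
    obtain ⟨y, hy, hβy⟩ := hβ x hx
    obtain ⟨z, hz, hαz⟩ := hα y hy
    exact ⟨z, hz, by rw [mul_assoc, hβy, hαz]⟩
  add_mem' {α β} hα hβ x hx := by
    obtain ⟨y, hy, hαy⟩ := hα x hx
    obtain ⟨z, hz, hβz⟩ := hβ x hx
    exact ⟨y + z, I.add_mem hy hz, by rw [add_mul, hαy, hβz, map_add]⟩
  algebraMap_mem' r x hx := ⟨r * x, I.mul_mem_left r hx, (map_mul _ _ _).symm⟩

lemma Ideal.isFractional_selfColon {I : Ideal R} {a : R} (ha : a ∈ I) (ha' : a ∈ R⁰) :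
    IsFractional R⁰ (Subalgebra.toSubmodule (I.selfColon K)) := by
  refine ⟨a, ha', fun α hα => ?_⟩
  obtain ⟨y, -, hy⟩ := hα a ha
  exact ⟨y, by rw [Algebra.smul_def, mul_comm, hy]⟩

lemma Ideal.selfColon_le_integralClosure [IsNoetherianRing R] [IsFractionRing R K] {I : Ideal R}
    {a : R} (ha : a ∈ I) (ha' : a ∈ R⁰) : I.selfColon K ≤ integralClosure R K :=
  fun α hα =>
    .of_mem_of_fg _ (Submodule.fg_of_isFractional (I.isFractional_selfColon ha ha')) α hα

lemma Ideal.selfColon_le_selfColon_traceIdeal [IsFractionRing R K] {I : Ideal R} {a : R}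
    (ha : a ∈ I) (ha' : a ∈ R⁰) : I.selfColon K ≤ (traceIdeal R I).selfColon K := by
  intro α hα
  suffices ∀ (f : I →ₗ[R] R) (j : I),
      ∃ y ∈ traceIdeal R I, α * algebraMap R K (f j) = algebraMap R K y by
    -- `{x ∈ R | α x ∈ tr I}`
    let P : Ideal R := (Submodule.map (Algebra.linearMap R K) (traceIdeal R I)).comap
      ((LinearMap.mulLeft R α).comp (Algebra.linearMap R K))
    have hP : traceIdeal R I ≤ P := traceIdeal_le_iff.mpr fun f j => by
      obtain ⟨y, hy, e⟩ := this f j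
      exact ⟨y, hy, e.symm⟩
    intro x hx
    obtain ⟨y, hy, e⟩ := hP hx
    exact ⟨y, hy, e.symm⟩
  intro f j
  obtain ⟨j', hj', hαj⟩ := hα j j.2
  refine ⟨f ⟨j', hj'⟩, apply_mem_traceIdeal _ _, ?_⟩
  set φ := algebraMap R K
  -- `f` is multiplication by `f a / a`
  have hfj : a * f j = j * f ⟨a, ha⟩ := I.mul_apply_comm f ⟨a, ha⟩ j
  have hfj' : a * f ⟨j', hj'⟩ = j' * f ⟨a, ha⟩ := I.mul_apply_comm f ⟨a, ha⟩ _
  refine (IsLocalization.map_units K (⟨a, ha'⟩ : R⁰)).mul_left_cancel ?_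
  calc φ a * (α * φ (f j)) = α * φ (a * f j) := by rw [map_mul]; ring
    _ = α * φ j * φ (f ⟨a, ha⟩) := by rw [hfj, map_mul]; ring
    _ = φ a * φ (f ⟨j', hj'⟩) := by rw [hαj, ← map_mul, ← hfj', map_mul]

lemma IsIntegral.exists_mem_selfColon [IsFractionRing R K] {α : K} (hα : IsIntegral R α) :
    ∃ J : Ideal R, (∃ a ∈ J, a ∈ R⁰) ∧ α ∈ J.selfColon K := by
  let A := Algebra.adjoin R {α}
  obtain ⟨b, hb, hbA⟩ := FractionalIdeal.isFractional_of_fg (S := R⁰) hα.fg_adjoin_singleton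
  -- the conductor of `R[α]` into `R`
  let J : Ideal R := (1 / Subalgebra.toSubmodule A).comap (Algebra.linearMap R K)
  have mem_J (x : R) : x ∈ J ↔ ∀ s ∈ A, ∃ r, algebraMap R K r = algebraMap R K x * s := by
    simp only [J, Submodule.mem_comap, Algebra.linearMap_apply,
      Submodule.mem_div_iff_forall_mul_mem, Submodule.mem_one, Subalgebra.mem_toSubmodule]
  have hαA : α ∈ A := Algebra.self_mem_adjoin_singleton R α
  refine ⟨J, ⟨b, (mem_J b).2 fun s hs => ?_, hb⟩, fun x hx => ?_⟩
  · obtain ⟨r, hr⟩ := hbA s hs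
    exact ⟨r, by rw [hr, Algebra.smul_def]⟩
  · obtain ⟨y, hy⟩ := (mem_J x).1 hx α hαA
    refine ⟨y, (mem_J y).2 fun s hs => ?_, by rw [hy, mul_comm]⟩
    rw [hy, mul_assoc]
    exact (mem_J x).1 hx _ (mul_mem hαA hs)

lemma isIntegral_iff_exists_mem_selfColon_traceIdeal [IsNoetherianRing R] [IsFractionRing R K]
    {α : K} : IsIntegral R α ↔
      ∃ I : Ideal R, ((∃ a ∈ I, a ∈ R⁰) ∧ traceIdeal R I = I) ∧
        α ∈ I.selfColon K := by
  refine ⟨fun hα => ?_, fun ⟨I, ⟨⟨a, ha, ha'⟩, _⟩, hαI⟩ =>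
    I.selfColon_le_integralClosure ha ha' hαI⟩
  obtain ⟨J, ⟨a, ha, ha'⟩, hαJ⟩ := hα.exists_mem_selfColon
  exact ⟨traceIdeal R J, ⟨⟨a, le_traceIdeal J ha, ha'⟩, traceIdeal_traceIdeal⟩,
    J.selfColon_le_selfColon_traceIdeal ha ha' hαJ⟩

end Colon

/-- The integral closure `R̄` of a Noetherian ring `R` in its total ring of fractions is
the union, over all regular trace ideals `I` of `R`, of the sets `(I : I) ⊆ Q(R)`.
Consequently, if `R` has only finitely many regular trace ideals, then `R̄` is a finitely
generated `R`-module. -/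
theorem integralClosure_eq_iUnion_colon_of_traceIdeals (R : Type*) [CommRing R]
    [IsNoetherianRing R] :
    ((integralClosure R (FractionRing R) : Set (FractionRing R)) =
      ⋃ I ∈ {I : Ideal R | (∃ a ∈ I, a ∈ nonZeroDivisors R) ∧ traceIdeal R I = I},
        {α : FractionRing R | ∀ x ∈ I, ∃ y ∈ I,
          α * algebraMap R (FractionRing R) x = algebraMap R (FractionRing R) y}) ∧
    ({I : Ideal R | (∃ a ∈ I, a ∈ nonZeroDivisors R) ∧ traceIdeal R I = I}.Finite →
      Module.Finite R (integralClosure R (FractionRing R))) := by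
  set T := {I : Ideal R | (∃ a ∈ I, a ∈ nonZeroDivisors R) ∧ traceIdeal R I = I}
  have hunion : (integralClosure R (FractionRing R) : Set (FractionRing R)) =
      ⋃ I ∈ T, (I.selfColon (FractionRing R) : Set (FractionRing R)) := by
    ext α
    simp only [SetLike.mem_coe, mem_integralClosure_iff, Set.mem_iUnion₂, exists_prop]
    exact isIntegral_iff_exists_mem_selfColon_traceIdeal
  refine ⟨hunion, fun hT => ?_⟩
  have := hT.to_subtype
  have hsup : Subalgebra.toSubmodule (integralClosure R (FractionRing R)) =
      ⨆ I : T, Subalgebra.toSubmodule ((I : Ideal R).selfColon (FractionRing R)) := by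
    refine le_antisymm (fun α hα => ?_) (iSup_le fun ⟨I, ⟨a, ha, ha'⟩, _⟩ =>
      I.selfColon_le_integralClosure ha ha')
    obtain ⟨I, hI, hαI⟩ := isIntegral_iff_exists_mem_selfColon_traceIdeal.1 hα
    exact Submodule.mem_iSup_of_mem ⟨I, hI⟩ hαI
  refine (Module.Finite.iff_fg (N := Subalgebra.toSubmodule (integralClosure R _))).2 ?_
  rw [hsup]
  refine Submodule.fg_iSup _ fun ⟨I, ⟨a, ha, ha'⟩, _⟩ => ?_
  exact Submodule.fg_of_isFractional (I.isFractional_selfColon ha ha')
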